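/- Let P = (p_1, …, p_n) be a finite linearly ordered set, let ℓ : P → {1,2,3} be a labeling ('true site') and D : P → {L, R} ('direction'). For i < j in {1,2,3}, say v ∈ P left-likes site i relative to the pair {i,j} if ℓ(v) = i, or D(v) = R, or ℓ(v) ∉ {i,j}. Suppose for each pair {i,j} (i<j) we are given a partition of P into a prefix P^{ij}_i and suffix P^{ij}_j such that every element of P^{ij}_i left-likes i relative to {i,j} and every element of P^{ij}_j left-likes j relative to {i,j}. If P^{12}_2 ∩ P^{23}_2 = ∅, then every v ∈ P^{13}_1 satisfies ℓ(v) = 1 or D(v) = R, and every v ∈ P^{13}_3 satisfies ℓ(v) = 3 or D(v) = R. -/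

import Mathlib

/-!
An element with `ℓ v = 2` and `D v = L` left-likes neither site 1 against 2 nor site 3 against 2,
so it lies in neither `P^{12}_1` nor `P^{23}_3`, hence in `P^{12}_2 ∩ P^{23}_2 = ∅`. Thus every
element labelled outside `{1, 3}` enters from the right, which settles the one case that the
`{1, 3}`-partition alone leaves open.
-/

/-- The direction (left or right) from which a shortest path enters the separator path. -/
inductive Dir | L | R
deriving DecidableEq

/-- `v` left-likes site `i` relative to the pair `{i, j}`: its true site is `i`, or its
shortest path enters from the right, or its true site is outside the pair. -/
def leftLikes {P : Type} (ℓ : P → Fin 3) (D : P → Dir) (i j : Fin 3) (v : P) : Prop :=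
  ℓ v = i ∨ D v = Dir.R ∨ (ℓ v ≠ i ∧ ℓ v ≠ j)

namespace leftLikes

variable {P : Type} {ℓ : P → Fin 3} {D : P → Dir} {i j : Fin 3} {v : P}

theorem dir_eq_R_of_label_eq (h : leftLikes ℓ D i j v) (hji : j ≠ i) (hv : ℓ v = j) :
    D v = Dir.R := by
  rcases h with hi | hR | ⟨_, hj⟩
  · exact absurd (hv.symm.trans hi) hji
  · exact hR
  · exact absurd hv hj

theorem label_eq_or_dir_eq_R (h : leftLikes ℓ D i j v)
    (hout : ℓ v ≠ i → ℓ v ≠ j → D v = Dir.R) : ℓ v = i ∨ D v = Dir.R := by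
  rcases h with hi | hR | ⟨hi, hj⟩
  · exact Or.inl hi
  · exact Or.inr hR
  · exact Or.inr (hout hi hj)

end leftLikes

theorem dir_eq_R_of_label_eq_one {P : Type} {ℓ : P → Fin 3} {D : P → Dir}
    {A12 B12 A23 B23 : Set P} (h12u : A12 ∪ B12 = Set.univ)
    (h12A : ∀ v ∈ A12, leftLikes ℓ D 0 1 v) (h23u : A23 ∪ B23 = Set.univ)
    (h23B : ∀ v ∈ B23, leftLikes ℓ D 2 1 v) (hempty : B12 ∩ A23 = ∅)
    {v : P} (hv : ℓ v = 1) : D v = Dir.R := by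
  rcases h12u.symm ▸ Set.mem_univ v with hA12 | hB12
  · exact (h12A v hA12).dir_eq_R_of_label_eq (by decide) hv
  · have hA23 : v ∉ A23 := fun hA23 => hempty.subset ⟨hB12, hA23⟩
    have hB23 : v ∈ B23 := (h23u.symm ▸ Set.mem_univ v).resolve_left hA23
    exact (h23B v hB23).dir_eq_R_of_label_eq (by decide) hv

/-- Sites `1, 2, 3` of the paper are `0, 1, 2 : Fin 3`. -/
theorem stmt10_general {P : Type}
    (ℓ : P → Fin 3) (D : P → Dir)
    (A12 B12 A23 B23 A13 B13 : Set P)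
    (h12u : A12 ∪ B12 = Set.univ)
    (h12A : ∀ v ∈ A12, leftLikes ℓ D 0 1 v)
    (h23u : A23 ∪ B23 = Set.univ)
    (h23B : ∀ v ∈ B23, leftLikes ℓ D 2 1 v)
    (h13A : ∀ v ∈ A13, leftLikes ℓ D 0 2 v) (h13B : ∀ v ∈ B13, leftLikes ℓ D 2 0 v)
    (hempty : B12 ∩ A23 = ∅) :
    (∀ v ∈ A13, ℓ v = 0 ∨ D v = Dir.R) ∧ (∀ v ∈ B13, ℓ v = 2 ∨ D v = Dir.R) := by
  have hmiddle : ∀ v, ℓ v ≠ 0 → ℓ v ≠ 2 → D v = Dir.R := fun v h0 h2 =>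
    dir_eq_R_of_label_eq_one h12u h12A h23u h23B hempty (by omega)
  exact ⟨fun v hv => (h13A v hv).label_eq_or_dir_eq_R (hmiddle v),
    fun v hv => (h13B v hv).label_eq_or_dir_eq_R (flip (hmiddle v))⟩

/-- Combining pairwise relaxed partitions: in the case `P^{12}_2 ∩ P^{23}_2 = ∅`, the two
parts of the `(1,3)`-partition are correct for the full set of three sites.
(Sites `1,2,3` are represented by `0,1,2 : Fin 3`.) -/
theorem stmt10 {P : Type} [LinearOrder P]
    (ℓ : P → Fin 3) (D : P → Dir)
    (A12 B12 A23 B23 A13 B13 : Set P)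
    (h12u : A12 ∪ B12 = Set.univ) (h12d : Disjoint A12 B12)
    (h12p : ∀ a b : P, a ≤ b → b ∈ A12 → a ∈ A12)
    (h12A : ∀ v ∈ A12, leftLikes ℓ D 0 1 v) (h12B : ∀ v ∈ B12, leftLikes ℓ D 1 0 v)
    (h23u : A23 ∪ B23 = Set.univ) (h23d : Disjoint A23 B23)
    (h23p : ∀ a b : P, a ≤ b → b ∈ A23 → a ∈ A23)
    (h23A : ∀ v ∈ A23, leftLikes ℓ D 1 2 v) (h23B : ∀ v ∈ B23, leftLikes ℓ D 2 1 v)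
    (h13u : A13 ∪ B13 = Set.univ) (h13d : Disjoint A13 B13)
    (h13p : ∀ a b : P, a ≤ b → b ∈ A13 → a ∈ A13)
    (h13A : ∀ v ∈ A13, leftLikes ℓ D 0 2 v) (h13B : ∀ v ∈ B13, leftLikes ℓ D 2 0 v)
    (hempty : B12 ∩ A23 = ∅) :
    (∀ v ∈ A13, ℓ v = 0 ∨ D v = Dir.R) ∧ (∀ v ∈ B13, ℓ v = 2 ∨ D v = Dir.R) :=
  stmt10_general ℓ D A12 B12 A23 B23 A13 B13 h12u h12A h23u h23B h13A h13B hempty
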